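/- arXiv:2306.00212 — 5 statements merged into one kernel-verified Lean document; each statement's English description precedes it below -/
import Mathlib

section
/- Let f: X × Y → ℝ be continuously differentiable, convex in x and concave in y, with X, Y compact convex subsets of ℝᵈ. Let D be a Bregman divergence induced by a continuously differentiable convex function φ. Suppose (x★, y★) solves min over x ∈ Δₓ, max over y ∈ Δ_y of f(x,y) + η⁻¹D(x,x') − η⁻¹D(y,y'), with x★, y★ interior points and η > 0. Then for all x ∈ Δₓ and y ∈ Δ_y: f(x★, y) + η⁻¹(D(x★,x') + D(y★,y')) ≤ f(x, y★) + η⁻¹(D(x,x') + D(y,y') − D(x,x★) − D(y,y★)). -/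
/-!
At an interior saddle point each block is an interior minimiser of a convex function
plus `η⁻¹ D(·, x')`, so Fermat's rule makes the derivative of the convex part equal to
`-η⁻¹ (∇φ(xs) - ∇φ(x'))`. The first-order inequality for the convex part, rewritten by the
three-point identity, then improves plain optimality by the extra term `η⁻¹ D(x, xs)`.
Adding the resulting inequalities for the two blocks gives the claim.
-/

open scoped RealInnerProductSpace
open InnerProductSpace

/-- Bregman divergence induced by `φ` with gradient map `φ'`. -/
noncomputable def bregmanDiv {d : ℕ}
    (φ : EuclideanSpace ℝ (Fin d) → ℝ) (φ' : EuclideanSpace ℝ (Fin d) → EuclideanSpace ℝ (Fin d))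
    (u v : EuclideanSpace ℝ (Fin d)) : ℝ :=
  φ u - φ v - ⟪φ' v, u - v⟫

theorem ConvexOn.le_sub_of_hasFDerivAt {E : Type*} [NormedAddCommGroup E] [NormedSpace ℝ E]
    {s : Set E} {g : E → ℝ} {g' : E →L[ℝ] ℝ} {x y : E} (hg : ConvexOn ℝ s g)
    (hx : x ∈ s) (hy : y ∈ s) (hg' : HasFDerivAt g g' x) :
    g' (y - x) ≤ g y - g x := by
  have hline := hg.comp_affineMap (AffineMap.lineMap x y : ℝ →ᵃ[ℝ] E)
  have hderiv : HasDerivAt (g ∘ (AffineMap.lineMap x y : ℝ →ᵃ[ℝ] E)) (g' (y - x)) 0 := by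
    refine HasFDerivAt.comp_hasDerivAt (0 : ℝ) ?_ AffineMap.hasDerivAt_lineMap
    simpa using hg'
  simpa [slope_def_field] using
    hline.le_slope_of_hasDerivAt (by simpa using hx) (by simpa using hy) zero_lt_one hderiv

section Bregman

variable {d : ℕ} (φ : EuclideanSpace ℝ (Fin d) → ℝ)
  (φ' : EuclideanSpace ℝ (Fin d) → EuclideanSpace ℝ (Fin d))

theorem inner_sub_bregmanDiv_three_point (u v w : EuclideanSpace ℝ (Fin d)) :
    ⟪φ' u - φ' v, w - u⟫
      = bregmanDiv φ φ' w v - bregmanDiv φ φ' u v - bregmanDiv φ φ' w u := by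
  simp only [bregmanDiv, inner_sub_left, inner_sub_right]
  ring

variable {φ φ'}

theorem hasFDerivAt_bregmanDiv (hφ' : ∀ v, HasGradientAt φ (φ' v) v)
    (u v : EuclideanSpace ℝ (Fin d)) :
    HasFDerivAt (fun w => bregmanDiv φ φ' w v) (toDual ℝ _ (φ' u - φ' v)) u := by
  have hlin : HasFDerivAt (fun w => ⟪φ' v, w - v⟫) (toDual ℝ _ (φ' v)) u := by
    simpa [inner_sub_right] using
      ((toDual ℝ _ (φ' v)).hasFDerivAt (x := u)).sub_const ⟪φ' v, v⟫
  rw [map_sub]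
  exact ((hasGradientAt_iff_hasFDerivAt.mp (hφ' u)).sub_const (φ v)).sub hlin

theorem ConvexOn.add_bregmanDiv_le_of_isMinOn (hφ' : ∀ v, HasGradientAt φ (φ' v) v)
    {s : Set (EuclideanSpace ℝ (Fin d))} {g : EuclideanSpace ℝ (Fin d) → ℝ}
    {g' : EuclideanSpace ℝ (Fin d) →L[ℝ] ℝ} {c : ℝ} {x' xs : EuclideanSpace ℝ (Fin d)}
    (hg : ConvexOn ℝ s g) (hg' : HasFDerivAt g g' xs) (hxs : xs ∈ interior s)
    (hmin : IsMinOn (fun u => g u + c * bregmanDiv φ φ' u x') s xs)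
    {x : EuclideanSpace ℝ (Fin d)} (hx : x ∈ s) :
    g xs + c * bregmanDiv φ φ' xs x' + c * bregmanDiv φ φ' x xs
      ≤ g x + c * bregmanDiv φ φ' x x' := by
  have hfermat : g' + c • toDual ℝ _ (φ' xs - φ' x') = 0 :=
    (hmin.isLocalMin (mem_interior_iff_mem_nhds.mp hxs)).hasFDerivAt_eq_zero
      (hg'.add ((hasFDerivAt_bregmanDiv hφ' xs x').const_mul c))
  have hg'_apply : g' (x - xs) = -c * ⟪φ' xs - φ' x', x - xs⟫ := by
    rw [eq_neg_of_add_eq_zero_left hfermat]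
    simp only [neg_apply, smul_apply, toDual_apply_apply, smul_eq_mul, neg_mul]
  have hgrad := hg.le_sub_of_hasFDerivAt (interior_subset hxs) hx hg'
  rw [hg'_apply, inner_sub_bregmanDiv_three_point] at hgrad
  linarith

end Bregman

theorem stmt_4_general {d : ℕ}
    (f : EuclideanSpace ℝ (Fin d) → EuclideanSpace ℝ (Fin d) → ℝ)
    (hf : ContDiff ℝ 1 (fun p : EuclideanSpace ℝ (Fin d) × EuclideanSpace ℝ (Fin d) => f p.1 p.2))
    (Δx Δy : Set (EuclideanSpace ℝ (Fin d)))
    (hfx : ∀ y ∈ Δy, ConvexOn ℝ Δx (fun x => f x y))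
    (hfy : ∀ x ∈ Δx, ConcaveOn ℝ Δy (fun y => f x y))
    (φ : EuclideanSpace ℝ (Fin d) → ℝ)
    (φ' : EuclideanSpace ℝ (Fin d) → EuclideanSpace ℝ (Fin d))
    (hφ' : ∀ v, HasGradientAt φ (φ' v) v)
    (η : ℝ)
    (x' y' xs ys : EuclideanSpace ℝ (Fin d))
    (hxs : xs ∈ interior Δx) (hys : ys ∈ interior Δy)
    -- `(xs, ys)` is a saddle point of `F(x,y) = f x y + η⁻¹ D(x,x') - η⁻¹ D(y,y')` on `Δx × Δy`
    (hsaddle : ∀ x ∈ Δx, ∀ y ∈ Δy,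
      f xs y + η⁻¹ * bregmanDiv φ φ' xs x' - η⁻¹ * bregmanDiv φ φ' y y'
        ≤ f xs ys + η⁻¹ * bregmanDiv φ φ' xs x' - η⁻¹ * bregmanDiv φ φ' ys y' ∧
      f xs ys + η⁻¹ * bregmanDiv φ φ' xs x' - η⁻¹ * bregmanDiv φ φ' ys y'
        ≤ f x ys + η⁻¹ * bregmanDiv φ φ' x x' - η⁻¹ * bregmanDiv φ φ' ys y') :
    ∀ x ∈ Δx, ∀ y ∈ Δy,
      f xs y + η⁻¹ * (bregmanDiv φ φ' xs x' + bregmanDiv φ φ' ys y')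
        ≤ f x ys + η⁻¹ * (bregmanDiv φ φ' x x' + bregmanDiv φ φ' y y'
            - bregmanDiv φ φ' x xs - bregmanDiv φ φ' y ys) := by
  intro x hx y hy
  generalize η⁻¹ = c at hsaddle ⊢
  have hxsΔ : xs ∈ Δx := interior_subset hxs
  have hysΔ : ys ∈ Δy := interior_subset hys
  have hdf := hf.differentiable one_ne_zero
  have hpush_x := (hfx ys hysΔ).add_bregmanDiv_le_of_isMinOn hφ' (c := c)
    (by fun_prop : DifferentiableAt ℝ (fun u => f u ys) xs).hasFDerivAt hxs
    (isMinOn_iff.mpr fun u hu => by linarith [(hsaddle u hu ys hysΔ).2]) hx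
  have hpush_y := (hfy xs hxsΔ).neg.add_bregmanDiv_le_of_isMinOn hφ' (c := c)
    (by fun_prop : DifferentiableAt ℝ (fun v => -f xs v) ys).hasFDerivAt hys
    (isMinOn_iff.mpr fun v hv => by
      simp only [Pi.neg_apply]
      linarith [(hsaddle xs hxsΔ v hv).1]) hy
  simp only [Pi.neg_apply] at hpush_y
  linarith

/-- Pushback property of a saddle point of the Bregman-regularized
convex-concave objective (Lemma on saddle-point mirror-descent steps). -/
theorem stmt_4 {d : ℕ}
    (f : EuclideanSpace ℝ (Fin d) → EuclideanSpace ℝ (Fin d) → ℝ)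
    (hf : ContDiff ℝ 1 (fun p : EuclideanSpace ℝ (Fin d) × EuclideanSpace ℝ (Fin d) => f p.1 p.2))
    (Δx Δy : Set (EuclideanSpace ℝ (Fin d)))
    (hΔxC : IsCompact Δx) (hΔxc : Convex ℝ Δx)
    (hΔyC : IsCompact Δy) (hΔyc : Convex ℝ Δy)
    (hfx : ∀ y ∈ Δy, ConvexOn ℝ Δx (fun x => f x y))
    (hfy : ∀ x ∈ Δx, ConcaveOn ℝ Δy (fun y => f x y))
    (φ : EuclideanSpace ℝ (Fin d) → ℝ)
    (φ' : EuclideanSpace ℝ (Fin d) → EuclideanSpace ℝ (Fin d))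
    (hφc : ConvexOn ℝ Set.univ φ)
    (hφ' : ∀ v, HasGradientAt φ (φ' v) v)
    (η : ℝ) (hη : 0 < η)
    (x' y' xs ys : EuclideanSpace ℝ (Fin d))
    (hxs : xs ∈ interior Δx) (hys : ys ∈ interior Δy)
    -- `(xs, ys)` is a saddle point of `F(x,y) = f x y + η⁻¹ D(x,x') - η⁻¹ D(y,y')` on `Δx × Δy`
    (hsaddle : ∀ x ∈ Δx, ∀ y ∈ Δy,
      f xs y + η⁻¹ * bregmanDiv φ φ' xs x' - η⁻¹ * bregmanDiv φ φ' y y'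
        ≤ f xs ys + η⁻¹ * bregmanDiv φ φ' xs x' - η⁻¹ * bregmanDiv φ φ' ys y' ∧
      f xs ys + η⁻¹ * bregmanDiv φ φ' xs x' - η⁻¹ * bregmanDiv φ φ' ys y'
        ≤ f x ys + η⁻¹ * bregmanDiv φ φ' x x' - η⁻¹ * bregmanDiv φ φ' ys y') :
    ∀ x ∈ Δx, ∀ y ∈ Δy,
      f xs y + η⁻¹ * (bregmanDiv φ φ' xs x' + bregmanDiv φ φ' ys y')
        ≤ f x ys + η⁻¹ * (bregmanDiv φ φ' x x' + bregmanDiv φ φ' y y'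
            - bregmanDiv φ φ' x xs - bregmanDiv φ φ' y ys) :=
  stmt_4_general f hf Δx Δy hfx hfy φ φ' hφ' η x' y' xs ys hxs hys hsaddle
end

section
/- Let x₁, …, xₙ be nonnegative reals with x_k ≤ X_{k−1} := max(1, Σ_{i=1}^{k−1} xᵢ) for every 1 ≤ k ≤ n. Then Σ_{k=1}^{n} x_k/√(X_{k−1}) ≤ (√2 + 1)·√(X_n), where X_n = max(1, Σ_{i=1}^{n} xᵢ). -/
/-!
The potential `Φ s = (√2 + 1) √(max 1 s) + min s 1` makes the sum telescope: each term
`x_k / √X_{k-1}` is at most `Φ S_k - Φ S_{k-1}`, where `S_k` are the prefix sums, and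
`Φ S_n - Φ 0 ≤ (√2 + 1) √X_n`; the `min s 1` term pays for the steps taken below the
threshold 1, where the denominator is 1. The increment bound rests on
`a = (√(y + a) - √y) (√(y + a) + √y)` and `√(y + a) ≤ √2 √y` whenever `0 ≤ a ≤ y`.
-/

open Finset

lemma div_sqrt_le_mul_sqrt_add_sub_sqrt {y a : ℝ} (hy : 0 < y) (ha : 0 ≤ a) (hay : a ≤ y) :
    a / √y ≤ (√2 + 1) * (√(y + a) - √y) := by
  have hu : 0 < √y := Real.sqrt_pos.mpr hy
  have hu2 : √y ^ 2 = y := Real.sq_sqrt hy.le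
  have hv2 : √(y + a) ^ 2 = y + a := Real.sq_sqrt (by linarith)
  have huv : √y ≤ √(y + a) := Real.sqrt_le_sqrt (by linarith)
  have hv : √(y + a) ≤ √2 * √y := by
    rw [← Real.sqrt_mul zero_le_two]
    exact Real.sqrt_le_sqrt (by linarith)
  rw [div_le_iff₀ hu]
  nlinarith [mul_le_mul_of_nonneg_left hv (sub_nonneg.mpr huv)]

noncomputable def potential (s : ℝ) : ℝ :=
  (√2 + 1) * √(max 1 s) + min s 1

lemma div_sqrt_le_potential_add_sub {s a : ℝ} (ha : 0 ≤ a) (has : a ≤ max 1 s) :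
    a / √(max 1 s) ≤ potential (s + a) - potential s := by
  unfold potential
  rcases le_or_gt 1 s with hs1 | hs1
  · rw [max_eq_right hs1] at has ⊢
    rw [max_eq_right (by linarith), min_eq_right hs1, min_eq_right (by linarith)]
    linarith [div_sqrt_le_mul_sqrt_add_sub_sqrt (by linarith) ha has]
  rw [max_eq_left hs1.le] at has ⊢
  rw [min_eq_left hs1.le, Real.sqrt_one, div_one]
  rcases le_or_gt (s + a) 1 with hsa1 | hsa1
  · rw [max_eq_left hsa1, min_eq_left hsa1, Real.sqrt_one]
    linarith
  -- Crossing the threshold 1 is an increment `s + a - 1 ≤ 1` on top of the base `1`.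
  have hcross := div_sqrt_le_mul_sqrt_add_sub_sqrt one_pos (a := s + a - 1) (by linarith)
    (by linarith)
  rw [Real.sqrt_one, div_one, add_sub_cancel] at hcross
  rw [max_eq_right hsa1.le, min_eq_right hsa1.le]
  linarith

lemma potential_sub_potential_zero_le {s : ℝ} :
    potential s - potential 0 ≤ (√2 + 1) * √(max 1 s) := by
  rw [potential, potential, max_eq_left zero_le_one, min_eq_left zero_le_one, Real.sqrt_one]
  linarith [min_le_right s 1, Real.sqrt_nonneg 2]

/-- Series inequality (Jaksch–Ortner–Auer, Lemma 19): if each `x k` is at most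
the clipped prefix sum before it, then `Σ x_k/√(X_{k-1}) ≤ (√2+1)√(X_n)`. -/
theorem stmt_9 (n : ℕ) (x : ℕ → ℝ) (hx0 : ∀ k, 0 ≤ x k)
    (hx : ∀ k < n, x k ≤ max 1 (∑ i ∈ Finset.range k, x i)) :
    ∑ k ∈ Finset.range n, x k / Real.sqrt (max 1 (∑ i ∈ Finset.range k, x i))
      ≤ (Real.sqrt 2 + 1) * Real.sqrt (max 1 (∑ i ∈ Finset.range n, x i)) := by
  set S : ℕ → ℝ := fun k ↦ ∑ i ∈ range k, x i
  calc ∑ k ∈ range n, x k / √(max 1 (S k))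
      ≤ ∑ k ∈ range n, (potential (S (k + 1)) - potential (S k)) := by
        refine sum_le_sum fun k hk ↦ ?_
        rw [show S (k + 1) = S k + x k from sum_range_succ x k]
        exact div_sqrt_le_potential_add_sub (hx0 k)
          (hx k (mem_range.mp hk))
    _ = potential (S n) - potential 0 := by
        rw [sum_range_sub (fun k ↦ potential (S k)), show S 0 = 0 from sum_range_zero x]
    _ ≤ (√2 + 1) * √(max 1 (S n)) := potential_sub_potential_zero_le
end

section
/- Consider an epoch schedule over T episodes on a finite set of state-action pairs of size S·A, where a new epoch starts whenever the within-epoch visit count of some pair reaches its total prior count (doubling condition), and each episode increments total visit counts by at most L with Σ total counts ≤ T·L appropriately normalized. If T ≥ S·A, then the total number of epochs K_T satisfies K_T ≤ S·A·log₂(8T/(S·A)). -/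
/-- Epoch-counting lemma (Jaksch–Ortner–Auer): with the doubling epoch
schedule over a finite set of state-action pairs, after `T` episodes
(total visit count at most `T`, `T ≥ S·A`), the number of epochs `K`
satisfies `K ≤ S·A·log₂(8T/(S·A))`. -/
theorem stmt_10 {ι : Type*} [Fintype ι] [Nonempty ι]
    (T K : ℕ) (N n : ℕ → ι → ℕ)
    (hN0 : ∀ p, N 0 p = 0)
    (hNrec : ∀ k p, N (k + 1) p = N k p + n k p)
    (hdouble : ∀ k < K, ∃ p, max 1 (N k p) ≤ n k p)
    (htotal : ∑ p, N K p ≤ T)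
    (hT : Fintype.card ι ≤ T) :
    (K : ℝ) ≤ (Fintype.card ι : ℝ) *
      Real.logb 2 (8 * T / (Fintype.card ι : ℝ)) := by
  classical
  set S := Fintype.card ι with hSdef
  have hSpos : 0 < S := Fintype.card_pos
  have hTpos : 0 < T := lt_of_lt_of_le hSpos hT
  choose f hf using hdouble
  let g : ℕ → ι := fun k => if h : k < K then f k h else Classical.arbitrary ι
  let m : ι → ℕ := fun p => ((Finset.range K).filter (fun k => g k = p)).card
  have hKsum : K = ∑ p, m p := by
    simpa using Finset.card_eq_sum_card_fiberwise
      (s := Finset.range K) (t := Finset.univ) (f := g) (fun x _ => Finset.mem_univ _)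
  -- key growth lemma
  have key : ∀ j, j ≤ K → ∀ p, 1 ≤ ((Finset.range j).filter (fun k => g k = p)).card →
      2 ^ ((Finset.range j).filter (fun k => g k = p)).card ≤ 2 * N j p := by
    intro j
    induction j with
    | zero => intro _ p h; simp at h
    | succ j ih =>
      intro hjK p hc
      have hjK' : j < K := hjK
      have hrec := hNrec j p
      by_cases hg : g j = p
      · have hfp : f j hjK' = p := by simpa [g, dif_pos hjK'] using hg
        have hn : max 1 (N j p) ≤ n j p := by rw [← hfp]; exact hf j hjK'
        have hn1 : 1 ≤ n j p := le_trans (le_max_left _ _) hn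
        have hnN : N j p ≤ n j p := le_trans (le_max_right _ _) hn
        have hcard : ((Finset.range (j+1)).filter (fun k => g k = p)).card
            = ((Finset.range j).filter (fun k => g k = p)).card + 1 := by
          rw [Finset.range_add_one, Finset.filter_insert, if_pos hg,
            Finset.card_insert_of_notMem (by simp)]
        rw [hcard, pow_succ]
        by_cases h0 : ((Finset.range j).filter (fun k => g k = p)).card = 0
        · rw [h0]; simpa using by omega
        · have hc1 : 1 ≤ ((Finset.range j).filter (fun k => g k = p)).card :=
            Nat.one_le_iff_ne_zero.mpr h0
          have ihj := ih (le_of_lt hjK') p hc1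
          omega
      · have hcard : ((Finset.range (j+1)).filter (fun k => g k = p)).card
            = ((Finset.range j).filter (fun k => g k = p)).card := by
          rw [Finset.range_add_one, Finset.filter_insert, if_neg hg]
        rw [hcard] at hc ⊢
        have ihj := ih (le_of_lt hjK') p hc
        omega
  -- sum bound
  have h1 : ∀ p, (2:ℕ) ^ (m p) ≤ 1 + 2 * N K p := by
    intro p
    by_cases h : 1 ≤ m p
    · simp only [m]
      have := key K le_rfl p h
      omega
    · have h0 : m p = 0 := by omega
      simp [h0]
  have hsum2 : ∑ p, (2:ℕ) ^ (m p) ≤ 4 * T := by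
    calc ∑ p, (2:ℕ) ^ (m p) ≤ ∑ p, (1 + 2 * N K p) :=
          Finset.sum_le_sum fun p _ => h1 p
      _ = S + 2 * ∑ p, N K p := by
          rw [Finset.sum_add_distrib, Finset.sum_const, Finset.card_univ, ← Finset.mul_sum]
          simp [hSdef]
      _ ≤ 4 * T := by omega
  -- AM-GM step
  have hSR : (0:ℝ) < (S:ℝ) := by exact_mod_cast hSpos
  have hw : ∑ _p : ι, (1 / (S:ℝ)) = 1 := by
    rw [Finset.sum_const, Finset.card_univ, ← hSdef, nsmul_eq_mul]
    field_simp
  have hamgm := Real.geom_mean_le_arith_mean_weighted Finset.univ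
      (fun _ : ι => 1 / (S:ℝ)) (fun p : ι => (2:ℝ) ^ (m p))
      (fun _ _ => by positivity) hw (fun _ _ => by positivity)
  have hlhs : ∏ p : ι, ((2:ℝ) ^ (m p)) ^ (1 / (S:ℝ))
      = (2:ℝ) ^ ((K:ℝ) / (S:ℝ)) := by
    have : ∀ p : ι, ((2:ℝ) ^ (m p)) ^ (1 / (S:ℝ))
        = (2:ℝ) ^ ((m p : ℝ) * (1 / (S:ℝ))) := by
      intro p
      rw [← Real.rpow_natCast (2:ℝ) (m p), ← Real.rpow_mul (by norm_num)]
    rw [Finset.prod_congr rfl (fun p _ => this p),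
      ← Real.rpow_sum_of_pos (by norm_num) _ _, ← Finset.sum_mul]
    congr 1
    rw [← Nat.cast_sum, ← hKsum]
    field_simp
  have hrhs : ∑ p : ι, (1 / (S:ℝ)) * ((2:ℝ) ^ (m p)) ≤ 4 * T / S := by
    rw [← Finset.mul_sum]
    have : (∑ p : ι, ((2:ℝ) ^ (m p))) ≤ 4 * T := by
      have := hsum2
      push_cast at this ⊢
      exact_mod_cast this
    calc (1 / (S:ℝ)) * ∑ p : ι, ((2:ℝ) ^ (m p)) ≤ (1 / (S:ℝ)) * (4 * T) := by
          apply mul_le_mul_of_nonneg_left this (by positivity)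
      _ = 4 * T / S := by ring
  have hmain : (2:ℝ) ^ ((K:ℝ) / (S:ℝ)) ≤ 8 * T / S := by
    rw [← hlhs]
    refine le_trans hamgm (le_trans hrhs ?_)
    have hT0 : (0:ℝ) ≤ (T:ℝ) := by positivity
    gcongr
    all_goals first | norm_num | linarith
  have hlog : (K:ℝ) / (S:ℝ) ≤ Real.logb 2 (8 * T / S) := by
    calc (K:ℝ) / (S:ℝ) = Real.logb 2 ((2:ℝ) ^ ((K:ℝ) / (S:ℝ))) :=
          (Real.logb_rpow (by norm_num) (by norm_num)).symm
      _ ≤ Real.logb 2 (8 * T / S) :=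
          Real.logb_le_logb_of_le (by norm_num)
            (Real.rpow_pos_of_pos (by norm_num) _) hmain
  have := (div_le_iff₀ hSR).mp hlog
  linarith
end

section
/- Let {Zᵗ}_{t≥0} be a supermartingale adapted to a filtration {Fᵗ} with Z⁰ = 0, and let {Yᵗ} be a stochastic process adapted to {Fᵗ}. Suppose there is c > 0 such that for every t ≥ 0 the event {|Z^{t+1} − Zᵗ| > c} is contained in {Yᵗ > 0}. Then for any z > 0 and t ≥ 1: P(Zᵗ ≥ z) ≤ exp(−z²/(2c²t)) + Σ_{τ=0}^{t−1} P(Y^τ > 0). -/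
/-!
Keep the increment `Z (n + 1) - Z n` only where `Y n ≤ 0`: the resulting martingale transform
`W = truncate Z Y` is again a supermartingale, its increments are bounded by `c`, and `W t = Z t`
unless `Y τ > 0` for some `τ < t`. Azuma–Hoeffding for `W` (Hoeffding's lemma conditionally on
`ℱ n`, iterated, then a Chernoff bound) and a union bound over the events `{Y τ > 0}` give the
claim.
-/

open MeasureTheory ProbabilityTheory Real Filter Finset

lemma exp_mul_le_cosh_add_mul_of_abs_le {c l x : ℝ} (hc : 0 < c) (hx : |x| ≤ c) :
    exp (l * x) ≤ cosh (l * c) + sinh (l * c) / c * x := by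
  obtain ⟨hx₁, hx₂⟩ := abs_le.mp hx
  -- `l * x` is the convex combination of `± l * c` with weight `θ` on `l * c`
  set θ := (c + x) / (2 * c)
  have hθ₀ : 0 ≤ θ := div_nonneg (by linarith) (by positivity)
  have hθ₁ : 0 ≤ 1 - θ := by
    rw [sub_nonneg, div_le_one (by positivity)]; linarith
  have hconv := convexOn_exp.2 (Set.mem_univ (l * c)) (Set.mem_univ (-(l * c))) hθ₀ hθ₁
    (add_sub_cancel _ _)
  have hcomb : θ • (l * c) + (1 - θ) • -(l * c) = l * x := by
    simp only [θ, smul_eq_mul]; field_simp; ring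
  rw [hcomb] at hconv
  refine hconv.trans_eq ?_
  rw [cosh_eq, sinh_eq, smul_eq_mul, smul_eq_mul]
  simp only [θ]; field_simp; ring

lemma abs_le_mul_of_abs_succ_sub_le {a : ℕ → ℝ} {c : ℝ} (ha₀ : a 0 = 0)
    (ha : ∀ n, |a (n + 1) - a n| ≤ c) (n : ℕ) : |a n| ≤ n * c := by
  induction n with
  | zero => simp [ha₀]
  | succ n ih =>
    push_cast
    linarith [abs_sub_abs_le_abs_sub (a (n + 1)) (a n), ha n]

section Azuma

variable {Ω : Type*} {m m0 : MeasurableSpace Ω} {μ : Measure Ω} [IsFiniteMeasure μ]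

theorem MeasureTheory.Supermartingale.condExp_sub_nonpos {ι : Type*} [Preorder ι]
    {ℱ : Filtration ι m0} {f : ι → Ω → ℝ} (hf : Supermartingale f ℱ μ) {i j : ι} (hij : i ≤ j) :
    μ[f j - f i | ℱ i] ≤ᵐ[μ] 0 := by
  filter_upwards [condExp_sub (hf.integrable j) (hf.integrable i) (ℱ i), hf.condExp_ae_le hij]
    with ω hsub hle
  rw [hsub, Pi.sub_apply, condExp_of_stronglyMeasurable (ℱ.le i) (hf.stronglyAdapted i)
    (hf.integrable i), Pi.zero_apply]
  exact sub_nonpos.mpr hle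

theorem integrable_exp_mul_of_abs_le {X : Ω → ℝ} {c : ℝ} (hX : AEStronglyMeasurable X μ)
    (hXc : ∀ ω, |X ω| ≤ c) (l : ℝ) : Integrable (fun ω => exp (l * X ω)) μ :=
  .of_bound (continuous_exp.comp_aestronglyMeasurable (hX.const_mul l)) (exp (|l| * c))
    (.of_forall fun ω => by
      rw [norm_of_nonneg (exp_pos _).le, exp_le_exp]
      calc l * X ω ≤ |l| * |X ω| := by rw [← abs_mul]; exact le_abs_self _
        _ ≤ |l| * c := mul_le_mul_of_nonneg_left (hXc ω) (abs_nonneg l))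

theorem condExp_exp_mul_le_of_abs_le (hm : m ≤ m0) {X : Ω → ℝ} {c l : ℝ} (hc : 0 < c)
    (hl : 0 ≤ l) (hX : AEStronglyMeasurable X μ) (hXc : ∀ ω, |X ω| ≤ c)
    (hXm : μ[X | m] ≤ᵐ[μ] 0) :
    μ[fun ω => exp (l * X ω) | m] ≤ᵐ[μ] fun _ => exp (l ^ 2 * c ^ 2 / 2) := by
  set A := cosh (l * c)
  set B := sinh (l * c) / c
  have hXint : Integrable X μ := .of_bound hX c (.of_forall hXc)
  have hexpint := integrable_exp_mul_of_abs_le hX hXc l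
  have hmono : μ[fun ω => exp (l * X ω) | m] ≤ᵐ[μ] μ[fun _ => A | m] + μ[B • X | m] := by
    filter_upwards [condExp_mono (m := m) hexpint ((integrable_const A).add (hXint.smul B))
        (.of_forall fun ω => exp_mul_le_cosh_add_mul_of_abs_le hc (hXc ω)),
      condExp_add (m := m) (integrable_const A) (hXint.smul B)] with ω hle hadd
    exact hle.trans_eq hadd
  have hB : 0 ≤ B := div_nonneg (sinh_nonneg_iff.mpr (by positivity)) hc.le
  have hA : A ≤ exp (l ^ 2 * c ^ 2 / 2) := (cosh_le_exp_half_sq _).trans_eq (by ring_nf)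
  filter_upwards [hmono, condExp_smul (m := m) B X, hXm] with ω hle hsmul hXω
  rw [Pi.add_apply, condExp_const hm, hsmul] at hle
  simp only [Pi.smul_apply, smul_eq_mul, Pi.zero_apply] at hle hXω
  linarith [mul_nonpos_of_nonneg_of_nonpos hB hXω]

theorem integral_mul_le_of_condExp_le (hm : m ≤ m0) {f g : Ω → ℝ} {C K : ℝ}
    (hf : StronglyMeasurable[m] f) (hf₀ : ∀ ω, 0 ≤ f ω) (hfC : ∀ ω, f ω ≤ C)
    (hg : Integrable g μ) (hgK : μ[g | m] ≤ᵐ[μ] fun _ => K) :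
    ∫ ω, f ω * g ω ∂μ ≤ K * ∫ ω, f ω ∂μ := by
  have hfbound : ∀ᵐ ω ∂μ, ‖f ω‖ ≤ C :=
    .of_forall fun ω => (norm_of_nonneg (hf₀ ω)).trans_le (hfC ω)
  have hfint : Integrable f μ := .of_bound (hf.mono hm).aestronglyMeasurable C hfbound
  calc ∫ ω, f ω * g ω ∂μ = ∫ ω, (μ[f * g | m]) ω ∂μ := (integral_condExp hm).symm
    _ = ∫ ω, f ω * (μ[g | m]) ω ∂μ :=
      integral_congr_ae (condExp_stronglyMeasurable_mul_of_bound hm hf hg C hfbound)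
    _ ≤ ∫ ω, f ω * K ∂μ := by
      refine integral_mono_ae (integrable_condExp.bdd_mul (hf.mono hm).aestronglyMeasurable
        hfbound) (hfint.mul_const K) ?_
      filter_upwards [hgK] with ω hω
      exact mul_le_mul_of_nonneg_left hω (hf₀ ω)
    _ = K * ∫ ω, f ω ∂μ := by rw [integral_mul_const, mul_comm]

variable {W : ℕ → Ω → ℝ} {ℱ : Filtration ℕ m0} {c : ℝ}

theorem MeasureTheory.Supermartingale.integral_exp_mul_le [IsProbabilityMeasure μ]
    (hW : Supermartingale W ℱ μ) (hW₀ : ∀ ω, W 0 ω = 0) (hc : 0 < c)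
    (hinc : ∀ n ω, |W (n + 1) ω - W n ω| ≤ c) {l : ℝ} (hl : 0 ≤ l) (n : ℕ) :
    ∫ ω, exp (l * W n ω) ∂μ ≤ exp (l ^ 2 * c ^ 2 / 2) ^ n := by
  induction n with
  | zero => simp [hW₀]
  | succ n ih =>
    have hmeas : AEStronglyMeasurable (W (n + 1) - W n) μ :=
      ((hW.stronglyAdapted (n + 1)).mono (ℱ.le _)).aestronglyMeasurable.sub
        ((hW.stronglyAdapted n).mono (ℱ.le _)).aestronglyMeasurable
    have hexp_le : ∀ ω, exp (l * W n ω) ≤ exp (l * (n * c)) := fun ω =>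
      exp_le_exp.mpr (mul_le_mul_of_nonneg_left
        (abs_le.mp (abs_le_mul_of_abs_succ_sub_le (a := (W · ω)) (hW₀ ω) (hinc · ω) n)).2 hl)
    calc ∫ ω, exp (l * W (n + 1) ω) ∂μ
        = ∫ ω, exp (l * W n ω) * exp (l * (W (n + 1) - W n) ω) ∂μ := by
          simp only [Pi.sub_apply, ← exp_add, ← mul_add, add_sub_cancel]
      _ ≤ exp (l ^ 2 * c ^ 2 / 2) * ∫ ω, exp (l * W n ω) ∂μ :=
          integral_mul_le_of_condExp_le (ℱ.le n)
            (continuous_exp.comp_stronglyMeasurable ((hW.stronglyAdapted n).const_mul l))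
            (fun ω => (exp_pos _).le) hexp_le
            (integrable_exp_mul_of_abs_le hmeas (hinc n) l)
            (condExp_exp_mul_le_of_abs_le (ℱ.le n) hc hl hmeas (hinc n)
              (hW.condExp_sub_nonpos n.le_succ))
      _ ≤ exp (l ^ 2 * c ^ 2 / 2) ^ (n + 1) :=
          (mul_le_mul_of_nonneg_left ih (exp_pos _).le).trans_eq (pow_succ' _ n).symm

theorem MeasureTheory.Supermartingale.measure_ge_le_exp [IsProbabilityMeasure μ]
    (hW : Supermartingale W ℱ μ) (hW₀ : ∀ ω, W 0 ω = 0) (hc : 0 < c)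
    (hinc : ∀ n ω, |W (n + 1) ω - W n ω| ≤ c) {z : ℝ} (hz : 0 ≤ z) (t : ℕ) :
    μ {ω | z ≤ W t ω} ≤ ENNReal.ofReal (exp (-z ^ 2 / (2 * c ^ 2 * t))) := by
  rcases t.eq_zero_or_pos with rfl | ht
  · simpa using prob_le_one
  -- Chernoff bound at the optimal parameter
  set l := z / (c ^ 2 * t)
  have hl : 0 ≤ l := by positivity
  have hint : Integrable (fun ω => exp (l * W t ω)) μ :=
    integrable_exp_mul_of_abs_le ((hW.stronglyAdapted t).mono (ℱ.le t)).aestronglyMeasurable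
      (fun ω => abs_le_mul_of_abs_succ_sub_le (a := (W · ω)) (hW₀ ω) (hinc · ω) t) l
  rw [← ofReal_measureReal]
  refine ENNReal.ofReal_le_ofReal ?_
  calc μ.real {ω | z ≤ W t ω} ≤ exp (-l * z) * mgf (W t) μ l :=
        measure_ge_le_exp_mul_mgf z hl hint
    _ ≤ exp (-l * z) * exp (l ^ 2 * c ^ 2 / 2) ^ t :=
        mul_le_mul_of_nonneg_left (hW.integral_exp_mul_le hW₀ hc hinc hl t) (exp_pos _).le
    _ = exp (-z ^ 2 / (2 * c ^ 2 * t)) := by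
        rw [← exp_nat_mul, ← exp_add]
        congr 1
        simp only [l]
        field_simp
        ring

end Azuma

section Truncation

variable {Ω : Type*} {m0 : MeasurableSpace Ω}

noncomputable def truncate (Z Y : ℕ → Ω → ℝ) (n : ℕ) (ω : Ω) : ℝ :=
  ∑ k ∈ range n, {ω | Y k ω ≤ 0}.indicator 1 ω * (Z (k + 1) ω - Z k ω)

variable {Z Y : ℕ → Ω → ℝ}

@[simp]
theorem truncate_zero (ω : Ω) : truncate Z Y 0 ω = 0 := by
  simp [truncate]

theorem truncate_succ_sub (n : ℕ) (ω : Ω) :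
    truncate Z Y (n + 1) ω - truncate Z Y n ω =
      {ω | Y n ω ≤ 0}.indicator 1 ω * (Z (n + 1) ω - Z n ω) := by
  simp [truncate, sum_range_succ]

theorem abs_truncate_succ_sub_le {c : ℝ} (hc : 0 ≤ c)
    (hsub : ∀ n, {ω | c < |Z (n + 1) ω - Z n ω|} ⊆ {ω | 0 < Y n ω}) (n : ℕ) (ω : Ω) :
    |truncate Z Y (n + 1) ω - truncate Z Y n ω| ≤ c := by
  rw [truncate_succ_sub]
  by_cases hY : Y n ω ≤ 0
  · simpa [hY] using fun h => (hsub n h).not_ge hY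
  · simpa [hY] using hc

theorem truncate_eq_sub_of_forall_nonpos {n : ℕ} {ω : Ω}
    (hY : ∀ k ∈ range n, Y k ω ≤ 0) : truncate Z Y n ω = Z n ω - Z 0 ω := by
  rw [truncate, ← sum_range_sub (Z · ω)]
  exact sum_congr rfl fun k hk => by simp [hY k hk]

theorem supermartingale_truncate {μ : Measure Ω} [IsFiniteMeasure μ] {ℱ : Filtration ℕ m0}
    (hZ : Supermartingale Z ℱ μ) (hY : Adapted ℱ Y) : Supermartingale (truncate Z Y) ℱ μ := by
  have hgood : StronglyAdapted ℱ fun k => {ω | Y k ω ≤ 0}.indicator (1 : Ω → ℝ) := fun k =>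
    stronglyMeasurable_const.indicator (measurableSet_le (hY k) measurable_const)
  have htransform : truncate Z Y =
      -fun n => ∑ k ∈ range n, {ω | Y k ω ≤ 0}.indicator 1 * ((-Z) (k + 1) - (-Z) k) := by
    funext n ω
    simp only [truncate, Pi.neg_apply, Finset.sum_apply, Pi.mul_apply, Pi.sub_apply,
      ← sum_neg_distrib]
    exact sum_congr rfl fun k _ => by ring
  rw [htransform]
  exact (hZ.neg.sum_mul_sub hgood (R := 1) (fun k ω => Set.indicator_le_self' (by simp) ω)
    (fun k ω => Set.indicator_nonneg (by simp) ω)).neg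

end Truncation

theorem stmt_11_general {Ω : Type*} {m0 : MeasurableSpace Ω} {μ : Measure Ω}
    [IsProbabilityMeasure μ] (ℱ : Filtration ℕ m0)
    (Z Y : ℕ → Ω → ℝ)
    (hZ : Supermartingale Z ℱ μ)
    (hZ0 : ∀ ω, Z 0 ω = 0)
    (hY : Adapted ℱ Y)
    (c : ℝ) (hc : 0 < c)
    (hsub : ∀ t : ℕ, {ω | c < |Z (t + 1) ω - Z t ω|} ⊆ {ω | 0 < Y t ω})
    (z : ℝ) (hz : 0 < z) (t : ℕ) :
    μ {ω | z ≤ Z t ω}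
      ≤ ENNReal.ofReal (Real.exp (-z ^ 2 / (2 * c ^ 2 * t)))
        + ∑ τ ∈ Finset.range t, μ {ω | 0 < Y τ ω} := by
  have hcover : {ω | z ≤ Z t ω} ⊆
      {ω | z ≤ truncate Z Y t ω} ∪ ⋃ τ ∈ range t, {ω | 0 < Y τ ω} := by
    intro ω hω
    by_cases hgood : ∀ τ ∈ range t, Y τ ω ≤ 0
    · left
      simpa [truncate_eq_sub_of_forall_nonpos hgood, hZ0] using hω
    · right
      push Not at hgood
      simpa using hgood
  calc μ {ω | z ≤ Z t ω}
      ≤ μ {ω | z ≤ truncate Z Y t ω} + μ (⋃ τ ∈ range t, {ω | 0 < Y τ ω}) :=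
        (measure_mono hcover).trans (measure_union_le _ _)
    _ ≤ _ := add_le_add
        ((supermartingale_truncate hZ hY).measure_ge_le_exp truncate_zero hc
          (abs_truncate_succ_sub_le hc.le hsub) hz.le t)
        (measure_biUnion_finset_le _ _)

/-- Generalized Azuma–Hoeffding inequality for supermartingales with possibly
unbounded increments (Yu–Neely–Wei 2017): if the event of an increment larger
than `c` is contained in `{Yᵗ > 0}`, then
`P(Zᵗ ≥ z) ≤ exp(−z²/(2c²t)) + Σ_{τ<t} P(Y^τ > 0)`. -/
theorem stmt_11 {Ω : Type*} {m0 : MeasurableSpace Ω} {μ : Measure Ω}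
    [IsProbabilityMeasure μ] (ℱ : Filtration ℕ m0)
    (Z Y : ℕ → Ω → ℝ)
    (hZ : Supermartingale Z ℱ μ)
    (hZ0 : ∀ ω, Z 0 ω = 0)
    (hY : Adapted ℱ Y)
    (c : ℝ) (hc : 0 < c)
    (hsub : ∀ t : ℕ, {ω | c < |Z (t + 1) ω - Z t ω|} ⊆ {ω | 0 < Y t ω})
    (z : ℝ) (hz : 0 < z) (t : ℕ) (ht : 1 ≤ t) :
    μ {ω | z ≤ Z t ω}
      ≤ ENNReal.ofReal (Real.exp (-z ^ 2 / (2 * c ^ 2 * t)))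
        + ∑ τ ∈ Finset.range t, μ {ω | 0 < Y τ ω} :=
  stmt_11_general ℱ Z Y hZ hZ0 hY c hc hsub z hz t
end

section
/- Let q̂ and q be occupancy measures on a loop-free layered MDP induced by the same policy π but by transition kernels P̂ and P respectively (i.e., q̂(x,a,x') = d̂(x)π(a|x)P̂(x'|x,a) and q(x,a,x') = d(x)π(a|x)P(x'|x,a), where d̂, d are the induced state-visitation probabilities with d̂(x₀) = d(x₀) = 1). Then Σ_ℓ Σ_{x∈X_ℓ} Σ_a ‖q̂(x,a,·) − q(x,a,·)‖₁ ≤ Σ_{j=0}^{L−1} Σ_{ℓ=0}^{j} Σ_{x∈X_ℓ} Σ_a π(a|x)·d̂(x)·‖P̂(·|x,a) − P(·|x,a)‖₁. -/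
/-!
Write `e ℓ = ∑ₓ |d̂(x) − d(x)|` for the visitation gap on layer `ℓ`. Splitting
`d̂ π P̂ − d π P = π ((d̂ − d) P + d̂ (P̂ − P))` bounds the occupancy gap on layer `ℓ` by
`e ℓ + Δ ℓ`, where `Δ ℓ` is the `d̂`-weighted kernel mismatch on that layer. Since the
next-layer visitation is the marginal of the occupancy measure, `e (ℓ + 1)` is at most the
occupancy gap on layer `ℓ`; with `e 0 = 0` this gives `e ℓ ≤ ∑_{j<ℓ} Δ j`, and summing
over the layers yields the claim.
-/

open Finset

theorem sum_abs_mul_sub_mul_le {ι : Type*} [Fintype ι] {u v : ℝ} {p q : ι → ℝ}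
    (hu : 0 ≤ u) (hq : ∀ i, 0 ≤ q i) (hq1 : ∑ i, q i = 1) :
    ∑ i, |u * p i - v * q i| ≤ |u - v| + u * ∑ i, |p i - q i| := by
  have pointwise : ∀ i, |u * p i - v * q i| ≤ |u - v| * q i + u * |p i - q i| := fun i =>
    calc |u * p i - v * q i| = |(u - v) * q i + u * (p i - q i)| := by ring_nf
      _ ≤ |(u - v) * q i| + |u * (p i - q i)| := abs_add_le _ _
      _ = |u - v| * q i + u * |p i - q i| := by
        rw [abs_mul, abs_mul, abs_of_nonneg (hq i), abs_of_nonneg hu]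
  calc ∑ i, |u * p i - v * q i| ≤ ∑ i, (|u - v| * q i + u * |p i - q i|) :=
        sum_le_sum fun i _ => pointwise i
    _ = |u - v| + u * ∑ i, |p i - q i| := by
        rw [sum_add_distrib, ← mul_sum, ← mul_sum, hq1, mul_one]

namespace LayeredMDP

variable {X : ℕ → Type*} [∀ ℓ, Fintype (X ℓ)] {A : Type*} [Fintype A]

def IsVisitation (π : (ℓ : ℕ) → X ℓ → A → ℝ) (P : (ℓ : ℕ) → X ℓ → A → X (ℓ + 1) → ℝ)
    (d : (ℓ : ℕ) → X ℓ → ℝ) : Prop :=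
  ∀ ℓ (x' : X (ℓ + 1)), d (ℓ + 1) x' = ∑ x : X ℓ, ∑ a, d ℓ x * π ℓ x a * P ℓ x a x'

def visitationGap (d₁ d₂ : (ℓ : ℕ) → X ℓ → ℝ) (ℓ : ℕ) : ℝ :=
  ∑ x : X ℓ, |d₁ ℓ x - d₂ ℓ x|

def occupancyGap (π : (ℓ : ℕ) → X ℓ → A → ℝ) (d₁ : (ℓ : ℕ) → X ℓ → ℝ)
    (P₁ : (ℓ : ℕ) → X ℓ → A → X (ℓ + 1) → ℝ) (d₂ : (ℓ : ℕ) → X ℓ → ℝ)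
    (P₂ : (ℓ : ℕ) → X ℓ → A → X (ℓ + 1) → ℝ) (ℓ : ℕ) : ℝ :=
  ∑ x : X ℓ, ∑ a : A, ∑ x' : X (ℓ + 1),
    |d₁ ℓ x * π ℓ x a * P₁ ℓ x a x' - d₂ ℓ x * π ℓ x a * P₂ ℓ x a x'|

def weightedKernelGap (π : (ℓ : ℕ) → X ℓ → A → ℝ) (d : (ℓ : ℕ) → X ℓ → ℝ)
    (P₁ P₂ : (ℓ : ℕ) → X ℓ → A → X (ℓ + 1) → ℝ) (ℓ : ℕ) : ℝ :=
  ∑ x : X ℓ, ∑ a : A, π ℓ x a * d ℓ x * ∑ x' : X (ℓ + 1), |P₁ ℓ x a x' - P₂ ℓ x a x'|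

variable {π : (ℓ : ℕ) → X ℓ → A → ℝ} {P P₁ P₂ : (ℓ : ℕ) → X ℓ → A → X (ℓ + 1) → ℝ}
  {d d₁ d₂ : (ℓ : ℕ) → X ℓ → ℝ}

theorem IsVisitation.nonneg (hd : IsVisitation π P d) (hπ : ∀ ℓ x a, 0 ≤ π ℓ x a)
    (hP : ∀ ℓ x a x', 0 ≤ P ℓ x a x') (hd0 : ∀ x, 0 ≤ d 0 x) : ∀ ℓ x, 0 ≤ d ℓ x := by
  intro ℓ
  induction ℓ with
  | zero => exact hd0
  | succ ℓ ih =>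
    intro x'
    rw [hd ℓ x']
    exact sum_nonneg fun x _ => sum_nonneg fun a _ =>
      mul_nonneg (mul_nonneg (ih x) (hπ ℓ x a)) (hP ℓ x a x')

theorem visitationGap_succ_le (h₁ : IsVisitation π P₁ d₁) (h₂ : IsVisitation π P₂ d₂)
    (ℓ : ℕ) : visitationGap d₁ d₂ (ℓ + 1) ≤ occupancyGap π d₁ P₁ d₂ P₂ ℓ := by
  unfold visitationGap occupancyGap
  calc ∑ x' : X (ℓ + 1), |d₁ (ℓ + 1) x' - d₂ (ℓ + 1) x'|
      ≤ ∑ x' : X (ℓ + 1), ∑ x : X ℓ, ∑ a : A,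
          |d₁ ℓ x * π ℓ x a * P₁ ℓ x a x' - d₂ ℓ x * π ℓ x a * P₂ ℓ x a x'| := by
        refine sum_le_sum fun x' _ => ?_
        rw [h₁ ℓ x', h₂ ℓ x', ← sum_sub_distrib]
        refine (abs_sum_le_sum_abs _ _).trans (sum_le_sum fun x _ => ?_)
        rw [← sum_sub_distrib]
        exact abs_sum_le_sum_abs _ _
    _ = _ := by
        rw [sum_comm]
        exact sum_congr rfl fun x _ => sum_comm

theorem occupancyGap_le (hπ0 : ∀ ℓ x a, 0 ≤ π ℓ x a) (hπ1 : ∀ ℓ x, ∑ a, π ℓ x a = 1)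
    (hP₂0 : ∀ ℓ x a x', 0 ≤ P₂ ℓ x a x') (hP₂1 : ∀ ℓ x a, ∑ x', P₂ ℓ x a x' = 1)
    (hd₁ : ∀ ℓ x, 0 ≤ d₁ ℓ x) (ℓ : ℕ) :
    occupancyGap π d₁ P₁ d₂ P₂ ℓ ≤ visitationGap d₁ d₂ ℓ + weightedKernelGap π d₁ P₁ P₂ ℓ := by
  have per_action : ∀ x a,
      ∑ x', |d₁ ℓ x * π ℓ x a * P₁ ℓ x a x' - d₂ ℓ x * π ℓ x a * P₂ ℓ x a x'|
        ≤ π ℓ x a * |d₁ ℓ x - d₂ ℓ x|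
          + π ℓ x a * d₁ ℓ x * ∑ x', |P₁ ℓ x a x' - P₂ ℓ x a x'| := by
    intro x a
    have factor_policy : ∀ x', |d₁ ℓ x * π ℓ x a * P₁ ℓ x a x' - d₂ ℓ x * π ℓ x a * P₂ ℓ x a x'|
        = π ℓ x a * |d₁ ℓ x * P₁ ℓ x a x' - d₂ ℓ x * P₂ ℓ x a x'| := fun x' => by
      rw [← abs_of_nonneg (hπ0 ℓ x a), ← abs_mul, abs_of_nonneg (hπ0 ℓ x a)]
      ring_nf
    calc _ = π ℓ x a * ∑ x', |d₁ ℓ x * P₁ ℓ x a x' - d₂ ℓ x * P₂ ℓ x a x'| := by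
          rw [mul_sum]
          exact sum_congr rfl fun x' _ => factor_policy x'
      _ ≤ π ℓ x a * (|d₁ ℓ x - d₂ ℓ x| + d₁ ℓ x * ∑ x', |P₁ ℓ x a x' - P₂ ℓ x a x'|) :=
          mul_le_mul_of_nonneg_left
            (sum_abs_mul_sub_mul_le (hd₁ ℓ x) (hP₂0 ℓ x a) (hP₂1 ℓ x a)) (hπ0 ℓ x a)
      _ = _ := by ring
  calc occupancyGap π d₁ P₁ d₂ P₂ ℓ
      ≤ ∑ x : X ℓ, ∑ a : A, (π ℓ x a * |d₁ ℓ x - d₂ ℓ x|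
          + π ℓ x a * d₁ ℓ x * ∑ x', |P₁ ℓ x a x' - P₂ ℓ x a x'|) :=
        sum_le_sum fun x _ => sum_le_sum fun a _ => per_action x a
    _ = visitationGap d₁ d₂ ℓ + weightedKernelGap π d₁ P₁ P₂ ℓ := by
        simp only [sum_add_distrib, ← sum_mul, hπ1, one_mul, visitationGap, weightedKernelGap]

theorem visitationGap_le_sum (h₁ : IsVisitation π P₁ d₁) (h₂ : IsVisitation π P₂ d₂)
    (hπ0 : ∀ ℓ x a, 0 ≤ π ℓ x a) (hπ1 : ∀ ℓ x, ∑ a, π ℓ x a = 1)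
    (hP₂0 : ∀ ℓ x a x', 0 ≤ P₂ ℓ x a x') (hP₂1 : ∀ ℓ x a, ∑ x', P₂ ℓ x a x' = 1)
    (hd₁ : ∀ ℓ x, 0 ≤ d₁ ℓ x) (h0 : ∀ x, d₁ 0 x = d₂ 0 x) (ℓ : ℕ) :
    visitationGap d₁ d₂ ℓ ≤ ∑ j ∈ range ℓ, weightedKernelGap π d₁ P₁ P₂ j := by
  induction ℓ with
  | zero => simp [visitationGap, h0]
  | succ ℓ ih =>
    rw [sum_range_succ]
    calc visitationGap d₁ d₂ (ℓ + 1) ≤ occupancyGap π d₁ P₁ d₂ P₂ ℓ :=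
          visitationGap_succ_le h₁ h₂ ℓ
      _ ≤ visitationGap d₁ d₂ ℓ + weightedKernelGap π d₁ P₁ P₂ ℓ :=
          occupancyGap_le hπ0 hπ1 hP₂0 hP₂1 hd₁ ℓ
      _ ≤ _ := by gcongr

end LayeredMDP

open LayeredMDP in
theorem stmt_15_general (L : ℕ) (X : ℕ → Type*) [∀ ℓ, Fintype (X ℓ)]
    {A : Type*} [Fintype A]
    (π : (ℓ : ℕ) → X ℓ → A → ℝ)
    (Phat P : (ℓ : ℕ) → X ℓ → A → X (ℓ + 1) → ℝ)
    (dhat d : (ℓ : ℕ) → X ℓ → ℝ)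
    (hπ0 : ∀ ℓ x a, 0 ≤ π ℓ x a) (hπ1 : ∀ ℓ x, ∑ a, π ℓ x a = 1)
    (hPhat0 : ∀ ℓ x a x', 0 ≤ Phat ℓ x a x')
    (hP0 : ∀ ℓ x a x', 0 ≤ P ℓ x a x')
    (hP1 : ∀ ℓ x a, ∑ x', P ℓ x a x' = 1)
    (hd0 : ∀ x : X 0, dhat 0 x = 1 ∧ d 0 x = 1)
    (hdhatrec : ∀ ℓ (x' : X (ℓ + 1)),
      dhat (ℓ + 1) x' = ∑ x : X ℓ, ∑ a, dhat ℓ x * π ℓ x a * Phat ℓ x a x')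
    (hdrec : ∀ ℓ (x' : X (ℓ + 1)),
      d (ℓ + 1) x' = ∑ x : X ℓ, ∑ a, d ℓ x * π ℓ x a * P ℓ x a x') :
    ∑ ℓ ∈ Finset.range L, ∑ x : X ℓ, ∑ a : A, ∑ x' : X (ℓ + 1),
        |dhat ℓ x * π ℓ x a * Phat ℓ x a x' - d ℓ x * π ℓ x a * P ℓ x a x'|
      ≤ ∑ j ∈ Finset.range L, ∑ ℓ ∈ Finset.range (j + 1), ∑ x : X ℓ, ∑ a : A,
          π ℓ x a * dhat ℓ x * ∑ x' : X (ℓ + 1), |Phat ℓ x a x' - P ℓ x a x'| := by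
  have hdhat : ∀ ℓ x, 0 ≤ dhat ℓ x :=
    IsVisitation.nonneg hdhatrec hπ0 hPhat0 fun x => (hd0 x).1 ▸ zero_le_one
  have h0 : ∀ x, dhat 0 x = d 0 x := fun x => (hd0 x).1.trans (hd0 x).2.symm
  refine sum_le_sum fun ℓ _ => ?_
  rw [sum_range_succ]
  calc occupancyGap π dhat Phat d P ℓ
      ≤ visitationGap dhat d ℓ + weightedKernelGap π dhat Phat P ℓ :=
        occupancyGap_le hπ0 hπ1 hP0 hP1 hdhat ℓ
    _ ≤ _ := add_le_add_left
        (visitationGap_le_sum hdhatrec hdrec hπ0 hπ1 hP0 hP1 hdhat h0 ℓ) _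

/-- Occupancy-measure mismatch bound: for two occupancy measures induced by
the same policy `π` but different transition kernels `P̂, P` on a loop-free
layered MDP, the total ℓ₁ mismatch is bounded by the cumulative, visitation-
weighted ℓ₁ mismatch of the transition kernels. -/
theorem stmt_15 (L : ℕ) (X : ℕ → Type*) [∀ ℓ, Fintype (X ℓ)] [Unique (X 0)]
    {A : Type*} [Fintype A]
    (π : (ℓ : ℕ) → X ℓ → A → ℝ)
    (Phat P : (ℓ : ℕ) → X ℓ → A → X (ℓ + 1) → ℝ)
    (dhat d : (ℓ : ℕ) → X ℓ → ℝ)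
    (hπ0 : ∀ ℓ x a, 0 ≤ π ℓ x a) (hπ1 : ∀ ℓ x, ∑ a, π ℓ x a = 1)
    (hPhat0 : ∀ ℓ x a x', 0 ≤ Phat ℓ x a x')
    (hPhat1 : ∀ ℓ x a, ∑ x', Phat ℓ x a x' = 1)
    (hP0 : ∀ ℓ x a x', 0 ≤ P ℓ x a x')
    (hP1 : ∀ ℓ x a, ∑ x', P ℓ x a x' = 1)
    (hd0 : ∀ x : X 0, dhat 0 x = 1 ∧ d 0 x = 1)
    (hdhatrec : ∀ ℓ (x' : X (ℓ + 1)),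
      dhat (ℓ + 1) x' = ∑ x : X ℓ, ∑ a, dhat ℓ x * π ℓ x a * Phat ℓ x a x')
    (hdrec : ∀ ℓ (x' : X (ℓ + 1)),
      d (ℓ + 1) x' = ∑ x : X ℓ, ∑ a, d ℓ x * π ℓ x a * P ℓ x a x') :
    ∑ ℓ ∈ Finset.range L, ∑ x : X ℓ, ∑ a : A, ∑ x' : X (ℓ + 1),
        |dhat ℓ x * π ℓ x a * Phat ℓ x a x' - d ℓ x * π ℓ x a * P ℓ x a x'|
      ≤ ∑ j ∈ Finset.range L, ∑ ℓ ∈ Finset.range (j + 1), ∑ x : X ℓ, ∑ a : A,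
          π ℓ x a * dhat ℓ x * ∑ x' : X (ℓ + 1), |Phat ℓ x a x' - P ℓ x a x'| :=
  stmt_15_general L X π Phat P dhat d hπ0 hπ1 hPhat0 hP0 hP1 hd0 hdhatrec hdrec
end
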